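/- For every δ with 0 < δ < 1/2 there exists a sequence of probabilities p_i ∈ (0, 1/2) such that ∏_{i=1}^∞ (1 - p_i) > 1 - δ and ∑_{i=1}^∞ (-p_i log₂ p_i - (1-p_i) log₂(1-p_i)) = ∞. -/

import Mathlib

open Filter Real Finset

/-!
Take `p n = (δ / 2) / ((n + 3) * log (n + 3) ^ 2)`. Telescoping against `1 / log (n + 2)` bounds
`∑ p n` by `δ / (2 log 2) < δ`, and the Weierstrass inequality `∏ (1 - p n) ≥ 1 - ∑ p n` keeps the
product above `1 - δ`. On the other hand `p n ≤ 1 / (n + 3)`, so `h (p n) ≥ p n * log₂ (1 / p n)` is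
at least a constant multiple of `1 / ((n + 3) * log (n + 3))`, whose series diverges by telescoping
against `log (log (n + 3))`.
-/

theorem Finset.one_sub_sum_le_prod_one_sub {ι R : Type*} [CommRing R] [LinearOrder R]
    [IsStrictOrderedRing R] (s : Finset ι) {f : ι → R} (hf₀ : ∀ i ∈ s, 0 ≤ f i)
    (hf₁ : ∀ i ∈ s, f i ≤ 1) : 1 - ∑ i ∈ s, f i ≤ ∏ i ∈ s, (1 - f i) := by
  classical
  induction s using Finset.induction_on with
  | empty => simp
  | insert j s hj ih =>
    rw [sum_insert hj, prod_insert hj]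
    have ih := ih (fun i hi => hf₀ i (mem_insert_of_mem hi))
      (fun i hi => hf₁ i (mem_insert_of_mem hi))
    have hj₀ := hf₀ j (mem_insert_self j s)
    have hj₁ := hf₁ j (mem_insert_self j s)
    have hsum : 0 ≤ ∑ i ∈ s, f i := sum_nonneg fun i hi => hf₀ i (mem_insert_of_mem hi)
    nlinarith [mul_le_mul_of_nonneg_left ih (sub_nonneg.2 hj₁)]

theorem exists_tendsto_prod_range_one_sub {f : ℕ → ℝ} {S : ℝ} (hf₀ : ∀ i, 0 ≤ f i)
    (hf₁ : ∀ i, f i ≤ 1) (hS : ∀ n, ∑ i ∈ range n, f i ≤ S) :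
    ∃ L, 1 - S ≤ L ∧ Tendsto (fun n => ∏ i ∈ range n, (1 - f i)) atTop (nhds L) := by
  have hmul := Real.multipliable_one_add_of_summable (summable_of_sum_range_le hf₀ hS).neg
  simp only [← sub_eq_add_neg] at hmul
  have htendsto := hmul.hasProd.tendsto_prod_nat
  refine ⟨_, ge_of_tendsto' htendsto fun n => ?_, htendsto⟩
  linarith [hS n, (range n).one_sub_sum_le_prod_one_sub (fun i _ => hf₀ i) (fun i _ => hf₁ i)]

theorem sum_range_le_of_le_sub_succ {a b : ℕ → ℝ} (hab : ∀ n, a n ≤ b n - b (n + 1)) (n : ℕ) :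
    ∑ i ∈ range n, a i ≤ b 0 - b n :=
  sum_range_sub' b n ▸ sum_le_sum fun i _ => hab i

theorem not_summable_of_succ_sub_le {a b : ℕ → ℝ} (ha : ∀ n, 0 ≤ a n)
    (hab : ∀ n, b (n + 1) - b n ≤ a n) (hb : Tendsto b atTop atTop) : ¬ Summable a := by
  rw [not_summable_iff_tendsto_nat_atTop_of_nonneg ha]
  refine tendsto_atTop_mono (fun n => ?_) (tendsto_atTop_add_const_right _ (-b 0) hb)
  rw [← sub_eq_add_neg, ← sum_range_sub]
  exact sum_le_sum fun i _ => hab i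

namespace Real

theorem log_sub_log_le_div {x y : ℝ} (hx : 0 < x) (hy : 0 < y) :
    log y - log x ≤ (y - x) / x := by
  rw [← log_div hy.ne' hx.ne', sub_div, div_self hx.ne']
  exact log_le_sub_one_of_pos (div_pos hy hx)

theorem one_div_mul_log_sq_le_inv_log_sub {x : ℝ} (hx : 1 < x) :
    1 / ((x + 1) * log (x + 1) ^ 2) ≤ 1 / log x - 1 / log (x + 1) := by
  have hlog : 0 < log x := log_pos hx
  have hlog_le : log x ≤ log (x + 1) := log_le_log (by linarith) (by linarith)
  have hgap : 1 / (x + 1) ≤ log (x + 1) - log x := by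
    have := log_sub_log_le_div (x := x + 1) (y := x) (by linarith) (by linarith)
    rw [show (x - (x + 1)) / (x + 1) = -(1 / (x + 1)) by ring] at this
    linarith
  rw [div_sub_div _ _ hlog.ne' (by linarith), one_mul, mul_one]
  calc 1 / ((x + 1) * log (x + 1) ^ 2) = 1 / (x + 1) / log (x + 1) ^ 2 := by rw [div_div]
    _ ≤ (log (x + 1) - log x) / (log x * log (x + 1)) := by
      gcongr
      · exact mul_pos hlog (hlog.trans_le hlog_le)
      · rw [sq]
        exact mul_le_mul_of_nonneg_right hlog_le (hlog.trans_le hlog_le).le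

theorem log_log_add_one_sub_le {x : ℝ} (hx : 1 < x) :
    log (log (x + 1)) - log (log x) ≤ 1 / (x * log x) := by
  have hlog : 0 < log x := log_pos hx
  calc log (log (x + 1)) - log (log x) ≤ (log (x + 1) - log x) / log x :=
        log_sub_log_le_div hlog (log_pos (by linarith))
    _ ≤ (x + 1 - x) / x / log x := by
        gcongr
        exact log_sub_log_le_div (by linarith) (by linarith)
    _ = 1 / (x * log x) := by ring

theorem one_lt_log_natCast_add_three (n : ℕ) : 1 < log (n + 3) :=
  calc (1 : ℝ) < log 3 := lt_trans (by norm_num) log_three_gt_d9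
    _ ≤ log (n + 3) := log_le_log (by norm_num) (by linarith [n.cast_nonneg (α := ℝ)])

theorem neg_mul_logb_sub_eq_binEntropy_div (p : ℝ) :
    -p * logb 2 p - (1 - p) * logb 2 (1 - p) = binEntropy p / log 2 := by
  simp only [binEntropy_eq_negMulLog_add_negMulLog_one_sub, negMulLog, logb]
  ring

theorem mul_log_le_binEntropy {p x : ℝ} (hp₀ : 0 < p) (hp₁ : p ≤ 1) (hx : 0 < x)
    (hpx : p * x ≤ 1) : p * log x ≤ binEntropy p := by
  have hlog : log x ≤ -log p := by
    rw [← log_inv, inv_eq_one_div]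
    exact log_le_log hx ((le_div_iff₀ hp₀).2 (by linarith))
  have := negMulLog_nonneg (sub_nonneg.2 hp₁) (by linarith)
  rw [binEntropy_eq_negMulLog_add_negMulLog_one_sub, negMulLog]
  nlinarith

end Real

theorem sum_range_one_div_mul_log_sq_le (n : ℕ) :
    ∑ i ∈ range n, 1 / ((i + 3 : ℝ) * log (i + 3) ^ 2) ≤ 1 / log 2 := by
  have hstep (k : ℕ) : 1 / ((k + 3 : ℝ) * log (k + 3) ^ 2) ≤
      1 / log (k + 2 : ℝ) - 1 / log ((k + 1 : ℕ) + 2 : ℝ) := by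
    have := one_div_mul_log_sq_le_inv_log_sub (x := k + 2) (by linarith [k.cast_nonneg (α := ℝ)])
    push_cast
    ring_nf at this ⊢
    exact this
  have hpos : 0 ≤ 1 / log (n + 2 : ℝ) :=
    one_div_nonneg.2 (log_nonneg (by linarith [n.cast_nonneg (α := ℝ)]))
  have := sum_range_le_of_le_sub_succ hstep n
  simp only [CharP.cast_eq_zero, zero_add] at this
  linarith

theorem mul_one_div_mul_log_sq_mul_le {c : ℝ} (hc : c ≤ 1) (n : ℕ) :
    c * (1 / ((n + 3 : ℝ) * log (n + 3) ^ 2)) * (n + 3) ≤ 1 := by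
  have hlog := one_lt_log_natCast_add_three n
  have : c * (1 / ((n + 3 : ℝ) * log (n + 3) ^ 2)) * (n + 3) = c / log (n + 3) ^ 2 := by
    field_simp
  rw [this, div_le_one (by positivity)]
  nlinarith

theorem not_summable_one_div_mul_log :
    ¬ Summable fun n : ℕ => 1 / ((n + 3 : ℝ) * log (n + 3)) := by
  refine not_summable_of_succ_sub_le (b := fun n : ℕ => log (log (n + 3 : ℝ)))
    (fun n => by have := one_lt_log_natCast_add_three n; positivity) (fun n => ?_) ?_
  · have := log_log_add_one_sub_le (x := n + 3) (by linarith [n.cast_nonneg (α := ℝ)])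
    push_cast
    ring_nf at this ⊢
    exact this
  · exact tendsto_log_atTop.comp <| tendsto_log_atTop.comp <|
      tendsto_atTop_add_const_right _ _ tendsto_natCast_atTop_atTop

theorem exists_seq_prod_large_entropy_diverges (δ : ℝ) (hδ0 : 0 < δ) (hδ1 : δ < 1 / 2) :
    ∃ p : ℕ → ℝ,
      (∀ i, 0 < p i ∧ p i < 1 / 2) ∧
      (∃ L : ℝ, L > 1 - δ ∧
        Tendsto (fun n => ∏ i ∈ Finset.range n, (1 - p i)) atTop (nhds L)) ∧
      ¬ Summable (fun i =>
          - p i * Real.logb 2 (p i) - (1 - p i) * Real.logb 2 (1 - p i)) := by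
  set p : ℕ → ℝ := fun n => δ / 2 * (1 / ((n + 3) * log (n + 3) ^ 2))
  have hlog (n : ℕ) := one_lt_log_natCast_add_three n
  have hp₀ (n : ℕ) : 0 < p n := by have := hlog n; positivity
  have hp_mul (n : ℕ) : p n * (n + 3) ≤ 1 := mul_one_div_mul_log_sq_mul_le (by linarith) n
  have hp_lt (n : ℕ) : p n < 1 / 2 := by nlinarith [hp₀ n, hp_mul n, n.cast_nonneg (α := ℝ)]
  refine ⟨p, fun n => ⟨hp₀ n, hp_lt n⟩, ?_, ?_⟩
  · obtain ⟨L, hL, hlim⟩ := exists_tendsto_prod_range_one_sub (S := δ / 2 / log 2)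
      (fun n => (hp₀ n).le) (fun n => (hp_lt n).le.trans (by norm_num)) fun n => by
        rw [← mul_sum, div_eq_mul_one_div (δ / 2)]
        gcongr
        exact sum_range_one_div_mul_log_sq_le n
    have : δ / 2 / log 2 < δ := by
      rw [div_lt_iff₀ (log_pos one_lt_two)]
      nlinarith [log_two_gt_d9]
    exact ⟨L, by linarith, hlim⟩
  · intro hsum
    apply not_summable_one_div_mul_log
    rw [← summable_mul_left_iff (by positivity : δ / 2 / log 2 ≠ 0)]
    refine hsum.of_nonneg_of_le (fun n => by have := hlog n; positivity) fun n => ?_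
    rw [neg_mul_logb_sub_eq_binEntropy_div]
    calc δ / 2 / log 2 * (1 / ((n + 3) * log (n + 3))) = p n * log (n + 3) / log 2 := by
          have := hlog n
          simp only [p]
          field_simp
      _ ≤ binEntropy (p n) / log 2 := by
          gcongr
          exact mul_log_le_binEntropy (hp₀ n) (by linarith [hp_lt n]) (by positivity) (hp_mul n)
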